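/- arXiv:2605.06962 — 3 statements merged into one kernel-verified Lean document; each statement's English description precedes it below -/
import Mathlib

section
/- Let K ⊆ ℝ/ℤ be a closed E_d-invariant set with the non-wandering property, and let y ∈ K be a regular critical point. Then y has exactly two E_d-preimages lying in K, and they are given by the two one-sided continuous inverse branches η_- and η_+ at y, which select distinct branches of E_d^{-1}. -/
/-- The expanding map `E_d(x) = d x mod 1` on the circle. -/
noncomputable def Ed (d : ℕ) : UnitAddCircle → UnitAddCircle := fun x => d • x

/-- The set of critical values of `K`: points of `K` with more than one `E_d`-preimage in `K`. -/
def critVals (d : ℕ) (K : Set UnitAddCircle) : Set UnitAddCircle :=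
  {x | x ∈ K ∧ ∃ y ∈ K, ∃ z ∈ K, y ≠ z ∧ Ed d y = x ∧ Ed d z = x}

/-- `K` has the non-wandering property: every point of `K` is non-wandering for `E_d|_K`. -/
def NonWanderingOn (d : ℕ) (K : Set UnitAddCircle) : Prop :=
  ∀ x ∈ K, ∀ ε : ℝ, 0 < ε →
    ∃ y ∈ K, ∃ n : ℕ, 0 < n ∧ dist x y < ε ∧ dist x ((Ed d)^[n] y) < ε

/-- A one-sided arc at `x`: the image of `x + t` for `t` ranging over a set of reals. -/
def sideArc (x : UnitAddCircle) (s : Set ℝ) : Set UnitAddCircle :=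
  (fun t : ℝ => x + (t : UnitAddCircle)) '' s

/-!
Near `y`, a point of `K` over a point `y + t ≠ y` of `K` is `y₁ + t / d` or `y₂ + t / d`, where `y₁`
and `y₂` are the limits of the two branches; hence a preimage of `y` in `K` that accumulates `K` is
`y₁` or `y₂`. A preimage of `y` isolated in `K` is periodic by the non-wandering property, so it is
`E_d^{n-1}(y)`. Two periodic points with the same image coincide, so one of the two preimages of `y`
in `K` accumulates `K`; since `E_d` is locally injective, so do `y` and its whole forward orbit,
which rules out isolated preimages altogether.
-/

open Set Filter Topology Function

lemma UnitAddCircle.norm_coe_le_abs (t : ℝ) : ‖(t : UnitAddCircle)‖ ≤ |t| := by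
  simpa [UnitAddCircle.norm_eq] using round_le t 0

lemma UnitAddCircle.norm_coe_div_natCast_le (t : ℝ) (d : ℕ) :
    ‖((t / d : ℝ) : UnitAddCircle)‖ ≤ |t| / d :=
  (norm_coe_le_abs _).trans_eq (by rw [abs_div, Nat.abs_cast])

lemma UnitAddCircle.exists_coe_eq_and_abs_eq_norm (x : UnitAddCircle) :
    ∃ t : ℝ, (t : UnitAddCircle) = x ∧ |t| = ‖x‖ := by
  induction x using QuotientAddGroup.induction_on with
  | H s =>
    refine ⟨s - round s, ?_, by rw [UnitAddCircle.norm_eq]⟩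
    rw [AddCircle.coe_sub, sub_eq_self, AddCircle.coe_eq_zero_iff]
    exact ⟨round s, by simp⟩

lemma AccPt.image_of_eventually_ne {X Y : Type*} [TopologicalSpace X] [TopologicalSpace Y]
    {f : X → Y} {x : X} {C : Set X} (hf : ContinuousAt f x) (hne : ∀ᶠ z in 𝓝[≠] x, f z ≠ f x)
    (h : AccPt x (𝓟 C)) : AccPt (f x) (𝓟 (f '' C)) :=
  (NeBot.map h f).mono <|
    (tendsto_nhdsWithin_iff.2 ⟨hf.tendsto.mono_left nhdsWithin_le_nhds, hne⟩).inf
      (tendsto_principal_principal.2 fun _ hz ↦ mem_image_of_mem f hz)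

lemma Function.IsPeriodicPt.iterate_pred_apply {α : Type*} {f : α → α} {n : ℕ} {x : α}
    (hx : IsPeriodicPt f n x) (hn : 0 < n) : f^[n - 1] (f x) = x := by
  rw [← iterate_succ_apply, Nat.succ_eq_add_one, Nat.sub_add_cancel hn]
  exact hx

lemma Set.eq_pair_of_subset_pair {α : Type*} {s : Set α} {a b x y : α} (hs : s ⊆ {x, y})
    (ha : a ∈ s) (hb : b ∈ s) (hab : a ≠ b) : x ≠ y ∧ s = {x, y} := by
  rcases hs ha with rfl | rfl <;> rcases hs hb with rfl | rfl
  all_goals first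
    | exact absurd rfl hab
    | exact ⟨hab, hs.antisymm (insert_subset ha (singleton_subset_iff.2 hb))⟩
    | exact ⟨hab.symm, hs.antisymm (insert_subset hb (singleton_subset_iff.2 ha))⟩

section Ed

variable {d : ℕ}

lemma Ed_apply (d : ℕ) (x : UnitAddCircle) : Ed d x = d • x := rfl

lemma Ed_coe_div (hd : 0 < d) (t : ℝ) : Ed d ((t / d : ℝ) : UnitAddCircle) = t := by
  rw [Ed_apply, ← AddCircle.coe_nsmul, nsmul_eq_mul, mul_div_cancel₀ _ (by positivity)]

lemma continuous_Ed (d : ℕ) : Continuous (Ed d) := continuous_nsmul d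

lemma dist_Ed_le (d : ℕ) (u v : UnitAddCircle) : dist (Ed d u) (Ed d v) ≤ d * dist u v := by
  rw [dist_eq_norm, dist_eq_norm, Ed_apply, Ed_apply, ← smul_sub]
  exact norm_nsmul_le

lemma finite_setOf_Ed_eq (hd : 0 < d) (y : UnitAddCircle) : {x | Ed d x = y}.Finite := by
  rcases eq_empty_or_nonempty {x | Ed d x = y} with h | ⟨x₀, hx₀⟩
  · exact h ▸ finite_empty
  refine ((AddCircle.finite_torsion (1 : ℝ) hd).image (x₀ + ·)).subset fun x hx ↦
    ⟨x - x₀, ?_, add_sub_cancel x₀ x⟩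
  simp only [mem_ofPred_eq, Ed_apply] at hx hx₀ ⊢
  rw [smul_sub, hx, hx₀, sub_self]

lemma inv_le_dist_of_Ed_eq (hd : 0 < d) {u v : UnitAddCircle} (h : Ed d u = Ed d v) (hne : u ≠ v) :
    (d : ℝ)⁻¹ ≤ dist u v := by
  have hzero : d • (u - v) = 0 := by rw [smul_sub, ← Ed_apply, ← Ed_apply, h, sub_self]
  have hfin : IsOfFinAddOrder (u - v) := isOfFinAddOrder_iff_nsmul_eq_zero.2 ⟨d, hd, hzero⟩
  have horder : (addOrderOf (u - v) : ℝ) ≤ d :=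
    Nat.cast_le.2 (Nat.le_of_dvd hd (addOrderOf_dvd_of_nsmul_eq_zero hzero))
  have h1 := AddCircle.le_add_order_smul_norm_of_isOfFinAddOrder hfin (sub_ne_zero.2 hne)
  rw [nsmul_eq_mul, ← dist_eq_norm] at h1
  rw [inv_le_iff_one_le_mul₀ (by positivity)]
  nlinarith [dist_nonneg (x := u) (y := v)]

lemma eventually_Ed_ne (hd : 0 < d) (x : UnitAddCircle) : ∀ᶠ z in 𝓝[≠] x, Ed d z ≠ Ed d x := by
  filter_upwards [inter_mem_nhdsWithin _ (Metric.ball_mem_nhds x (inv_pos.2 (Nat.cast_pos.2 hd)))]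
    with z ⟨hzx, hz⟩ h
  exact (inv_le_dist_of_Ed_eq hd h hzx).not_gt hz

lemma AccPt.apply_Ed (hd : 0 < d) {K : Set UnitAddCircle} (hK : MapsTo (Ed d) K K)
    {x : UnitAddCircle} (h : AccPt x (𝓟 K)) : AccPt (Ed d x) (𝓟 K) :=
  (h.image_of_eventually_ne (continuous_Ed d).continuousAt (eventually_Ed_ne hd x)).mono
    (principal_mono.2 (image_subset_iff.2 hK))

lemma AccPt.iterate_Ed (hd : 0 < d) {K : Set UnitAddCircle} (hK : MapsTo (Ed d) K K)
    {x : UnitAddCircle} (h : AccPt x (𝓟 K)) (n : ℕ) : AccPt ((Ed d)^[n] x) (𝓟 K) := by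
  induction n with
  | zero => exact h
  | succ n ih => rw [iterate_succ_apply']; exact ih.apply_Ed hd hK

lemma exists_isPeriodicPt_of_not_accPt {K : Set UnitAddCircle} (hK : MapsTo (Ed d) K K)
    (hnw : NonWanderingOn d K) {x : UnitAddCircle} (hx : x ∈ K) (h : ¬AccPt x (𝓟 K)) :
    ∃ n, 0 < n ∧ IsPeriodicPt (Ed d) n x := by
  obtain ⟨U, hU, hUK⟩ : ∃ U ∈ 𝓝 x, ∀ z ∈ U ∩ K, z = x := by
    simpa [accPt_iff_nhds] using h
  obtain ⟨r, hr, hball⟩ := Metric.mem_nhds_iff.1 hU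
  obtain ⟨z, hz, n, hn, hxz, hxn⟩ := hnw x hx r hr
  have hzx : z = x := hUK z ⟨hball (by rwa [Metric.mem_ball, dist_comm]), hz⟩
  subst hzx
  exact ⟨n, hn, hUK _ ⟨hball (by rwa [Metric.mem_ball, dist_comm]), hK.iterate n hz⟩⟩

lemma accPt_of_Ed_eq_of_mem_critVals (hd : 0 < d) {K : Set UnitAddCircle}
    (hK : MapsTo (Ed d) K K) (hnw : NonWanderingOn d K) {y w : UnitAddCircle}
    (hy : y ∈ critVals d K) (hwK : w ∈ K) (hw : Ed d w = y) : AccPt w (𝓟 K) := by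
  obtain ⟨-, a, haK, b, hbK, hab, hay, hby⟩ := hy
  have hyacc : AccPt y (𝓟 K) := by
    by_contra hy
    obtain ⟨n, hn, ha⟩ :=
      exists_isPeriodicPt_of_not_accPt hK hnw haK fun h ↦ hy (hay ▸ h.apply_Ed hd hK)
    obtain ⟨m, hm, hb⟩ :=
      exists_isPeriodicPt_of_not_accPt hK hnw hbK fun h ↦ hy (hby ▸ h.apply_Ed hd hK)
    exact hab (ha.eq_of_apply_eq hb hn hm (hay.trans hby.symm))
  by_contra hacc
  obtain ⟨n, hn, hper⟩ := exists_isPeriodicPt_of_not_accPt hK hnw hwK hacc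
  have hw_orbit : (Ed d)^[n - 1] y = w := hw ▸ hper.iterate_pred_apply hn
  exact hacc (hw_orbit ▸ hyacc.iterate_Ed hd hK (n - 1))

lemma exists_eq_add_div_of_continuousOn (hd : 0 < d) {y : UnitAddCircle} {I : Set ℝ}
    (hI : IsPreconnected I) (hIne : I.Nonempty) {η : UnitAddCircle → UnitAddCircle}
    (hc : ContinuousOn η (sideArc y I)) (hsec : ∀ z ∈ sideArc y I, Ed d (η z) = z) :
    ∃ c, Ed d c = y ∧ ∀ t ∈ I, η (y + t) = c + ((t / d : ℝ) : UnitAddCircle) := by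
  set g : ℝ → UnitAddCircle := fun t ↦ η (y + t) - ((t / d : ℝ) : UnitAddCircle)
  have hmem : MapsTo (fun t : ℝ ↦ y + (t : UnitAddCircle)) I (sideArc y I) :=
    fun t ht ↦ mem_image_of_mem _ ht
  have hfib : MapsTo g I {x | Ed d x = y} := fun t ht ↦ by
    simp only [mem_ofPred_eq, g, Ed_apply, smul_sub]
    rw [← Ed_apply, ← Ed_apply, hsec _ (hmem ht), Ed_coe_div hd, add_sub_cancel_right]
  have hg : ContinuousOn g I :=
    (hc.comp (continuous_const.add (AddCircle.continuous_mk' 1)).continuousOn hmem).sub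
      (AddCircle.continuous_mk' 1 |>.comp (continuous_id.div_const _)).continuousOn
  -- `g` is continuous with values in a finite fibre of `E_d`, hence constant on `I`.
  obtain ⟨t₀, ht₀⟩ := hIne
  refine ⟨g t₀, hfib ht₀, fun t ht ↦ ?_⟩
  rw [← hI.constant_of_mapsTo (finite_setOf_Ed_eq hd y).isDiscrete hg hfib ht ht₀]
  simp [g]

lemma tendsto_of_eq_add_div (hd : 0 < d) {y c : UnitAddCircle} {I : Set ℝ}
    (hI : ∀ t ∈ I, |t| ≤ 1 / 2) {η : UnitAddCircle → UnitAddCircle}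
    (hη : ∀ t ∈ I, η (y + t) = c + ((t / d : ℝ) : UnitAddCircle)) :
    Tendsto η (𝓝[sideArc y I] y) (𝓝 c) := by
  rw [Metric.tendsto_nhdsWithin_nhds]
  refine fun δ hδ ↦ ⟨δ, hδ, ?_⟩
  rintro _ ⟨t, ht, rfl⟩ hdist
  rw [dist_eq_norm, add_sub_cancel_left,
    (AddCircle.norm_coe_eq_abs_iff 1 one_ne_zero).2 (by simpa using hI t ht)] at hdist
  rw [hη t ht, dist_eq_norm, add_sub_cancel_left]
  calc ‖((t / d : ℝ) : UnitAddCircle)‖ ≤ |t| / d := UnitAddCircle.norm_coe_div_natCast_le t d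
    _ ≤ |t| := div_le_self (abs_nonneg t) (Nat.one_le_cast.2 hd)
    _ < δ := hdist

lemma eq_add_div_of_Ed_eq {K : Set UnitAddCircle} (hK : MapsTo (Ed d) K K)
    {y c : UnitAddCircle} {I : Set ℝ} {η : UnitAddCircle → UnitAddCircle}
    (hsel : ∀ z ∈ sideArc y I, z ∈ K → {w | Ed d w = z} ∩ K = {η z})
    (hη : ∀ t ∈ I, η (y + t) = c + ((t / d : ℝ) : UnitAddCircle)) {t : ℝ} (ht : t ∈ I)
    {u : UnitAddCircle} (hu : u ∈ K) (hEu : Ed d u = y + t) :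
    u = c + ((t / d : ℝ) : UnitAddCircle) := by
  have hu' : u ∈ {w | Ed d w = y + t} ∩ K := ⟨hEu, hu⟩
  rwa [hsel _ (mem_image_of_mem _ ht) (hEu ▸ hK hu), mem_singleton_iff, hη t ht] at hu'

lemma mem_of_accPt_of_forall_eq_add_div (hd : 0 < d) {K C : Set UnitAddCircle}
    {y w : UnitAddCircle} {ε : ℝ} (hε : 0 < ε) (hC : ∀ c ∈ C, Ed d c = y)
    (hbranch : ∀ t : ℝ, t ≠ 0 → |t| < ε → ∀ u ∈ K, Ed d u = y + t →
      ∃ c ∈ C, u = c + ((t / d : ℝ) : UnitAddCircle))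
    (hw : Ed d w = y) (hacc : AccPt w (𝓟 K)) : w ∈ C := by
  have hdR : (0 : ℝ) < d := Nat.cast_pos.2 hd
  -- `ρ` makes `E_d u` land within `ε` of `y`, and `w` within `1 / d` of the branch point of `u`.
  set ρ := min (ε / d) (1 / (2 * d))
  have hρ : 0 < ρ := by positivity
  obtain ⟨u, ⟨hu, huK⟩, huw⟩ := accPt_iff_nhds.1 hacc _ (Metric.ball_mem_nhds w hρ)
  rw [Metric.mem_ball] at hu
  have hρd : (d : ℝ) * ρ ≤ ε := by
    calc (d : ℝ) * ρ ≤ d * (ε / d) := by gcongr; exact min_le_left _ _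
      _ = ε := by field_simp
  have hρinv : 2 * ρ ≤ (d : ℝ)⁻¹ := by
    calc 2 * ρ ≤ 2 * (1 / (2 * d)) := by gcongr; exact min_le_right _ _
      _ = (d : ℝ)⁻¹ := by field_simp
  obtain ⟨t, ht, htnorm⟩ := UnitAddCircle.exists_coe_eq_and_abs_eq_norm (Ed d u - y)
  have hEu : Ed d u = y + t := by rw [ht, add_sub_cancel]
  have htu : |t| ≤ d * dist u w := by
    rw [htnorm, ← dist_eq_norm, ← hw]; exact dist_Ed_le d u w
  have ht0 : t ≠ 0 := by
    rintro rfl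
    rw [AddCircle.coe_zero, add_zero, ← hw] at hEu
    linarith [inv_le_dist_of_Ed_eq hd hEu huw]
  obtain ⟨c, hc, huc⟩ := hbranch t ht0 (by nlinarith) u huK hEu
  have hcu : dist u c ≤ dist u w := by
    rw [huc, dist_eq_norm, add_sub_cancel_left]
    calc ‖((t / d : ℝ) : UnitAddCircle)‖ ≤ |t| / d := UnitAddCircle.norm_coe_div_natCast_le t d
      _ ≤ _ := by rw [← huc, div_le_iff₀ hdR]; linarith
  by_contra hwc
  have hcw := inv_le_dist_of_Ed_eq hd (hw.trans (hC c hc).symm) fun h ↦ hwc (h ▸ hc)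
  linarith [dist_triangle_left w c u]

end Ed

theorem stmt4_general (d : ℕ) (hd : 2 ≤ d) (K : Set UnitAddCircle)
    (hinv : Ed d '' K = K)
    (hnw : NonWanderingOn d K)
    (y : UnitAddCircle) (hy : y ∈ critVals d K)
    (ε : ℝ) (hε : 0 < ε) (hε' : ε < 1 / 2)
    (ηm ηp : UnitAddCircle → UnitAddCircle)
    (hmc : ContinuousOn ηm (sideArc y (Set.Ioo (-ε) 0)))
    (hpc : ContinuousOn ηp (sideArc y (Set.Ioo 0 ε)))
    (hmsel : ∀ z ∈ sideArc y (Set.Ioo (-ε) 0),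
      Ed d (ηm z) = z ∧ (z ∈ K → {w : UnitAddCircle | Ed d w = z} ∩ K = {ηm z}))
    (hpsel : ∀ z ∈ sideArc y (Set.Ioo 0 ε),
      Ed d (ηp z) = z ∧ (z ∈ K → {w : UnitAddCircle | Ed d w = z} ∩ K = {ηp z})) :
    ∃ y₁ y₂ : UnitAddCircle, y₁ ≠ y₂ ∧
      {w : UnitAddCircle | Ed d w = y} ∩ K = {y₁, y₂} ∧
      Filter.Tendsto ηm (nhdsWithin y (sideArc y (Set.Ioo (-ε) 0))) (nhds y₁) ∧
      Filter.Tendsto ηp (nhdsWithin y (sideArc y (Set.Ioo 0 ε))) (nhds y₂) := by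
  have hd₀ : 0 < d := by omega
  have hK : MapsTo (Ed d) K K := (mapsTo_image (Ed d) K).mono_right hinv.subset
  obtain ⟨y₁, hy₁, hm⟩ := exists_eq_add_div_of_continuousOn hd₀ isPreconnected_Ioo
    (nonempty_Ioo.2 (neg_neg_of_pos hε)) hmc fun z hz ↦ (hmsel z hz).1
  obtain ⟨y₂, hy₂, hp⟩ := exists_eq_add_div_of_continuousOn hd₀ isPreconnected_Ioo
    (nonempty_Ioo.2 hε) hpc fun z hz ↦ (hpsel z hz).1
  have hbranch : ∀ t : ℝ, t ≠ 0 → |t| < ε → ∀ u ∈ K, Ed d u = y + t →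
      ∃ c ∈ ({y₁, y₂} : Set UnitAddCircle), u = c + ((t / d : ℝ) : UnitAddCircle) := by
    intro t ht0 htε u hu hEu
    rcases ht0.lt_or_gt with hneg | hpos
    · exact ⟨y₁, Or.inl rfl, eq_add_div_of_Ed_eq hK (fun z hz ↦ (hmsel z hz).2) hm
        ⟨by linarith [neg_abs_le t], hneg⟩ hu hEu⟩
    · exact ⟨y₂, Or.inr rfl, eq_add_div_of_Ed_eq hK (fun z hz ↦ (hpsel z hz).2) hp
        ⟨hpos, by linarith [le_abs_self t]⟩ hu hEu⟩
  have hfiber : {w | Ed d w = y} ∩ K ⊆ {y₁, y₂} := fun w ⟨hw, hwK⟩ ↦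
    mem_of_accPt_of_forall_eq_add_div hd₀ hε (by rintro c (rfl | rfl); exacts [hy₁, hy₂])
      hbranch hw (accPt_of_Ed_eq_of_mem_critVals hd₀ hK hnw hy hwK hw)
  obtain ⟨-, a, haK, b, hbK, hab, hay, hby⟩ := hy
  obtain ⟨hne, heq⟩ := eq_pair_of_subset_pair hfiber ⟨hay, haK⟩ ⟨hby, hbK⟩ hab
  have hhalf : ∀ t ∈ Ioo (-ε) ε, |t| ≤ 1 / 2 := fun t ht ↦ (abs_lt.2 ht).le.trans hε'.le
  exact ⟨y₁, y₂, hne, heq,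
    tendsto_of_eq_add_div hd₀ (fun t ht ↦ hhalf t ⟨ht.1, ht.2.trans hε⟩) hm,
    tendsto_of_eq_add_div hd₀ (fun t ht ↦ hhalf t ⟨(neg_neg_of_pos hε).trans ht.1, ht.2⟩) hp⟩

theorem stmt4 (d : ℕ) (hd : 2 ≤ d) (K : Set UnitAddCircle)
    (hKne : K.Nonempty) (hKc : IsCompact K) (hinv : Ed d '' K = K)
    (hnw : NonWanderingOn d K)
    (y : UnitAddCircle) (hy : y ∈ critVals d K)
    (ε : ℝ) (hε : 0 < ε) (hε' : ε < 1 / 2)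
    (ηm ηp : UnitAddCircle → UnitAddCircle)
    (hmc : ContinuousOn ηm (sideArc y (Set.Ioo (-ε) 0)))
    (hpc : ContinuousOn ηp (sideArc y (Set.Ioo 0 ε)))
    (hmsel : ∀ z ∈ sideArc y (Set.Ioo (-ε) 0),
      Ed d (ηm z) = z ∧ (z ∈ K → {w : UnitAddCircle | Ed d w = z} ∩ K = {ηm z}))
    (hpsel : ∀ z ∈ sideArc y (Set.Ioo 0 ε),
      Ed d (ηp z) = z ∧ (z ∈ K → {w : UnitAddCircle | Ed d w = z} ∩ K = {ηp z})) :
    ∃ y₁ y₂ : UnitAddCircle, y₁ ≠ y₂ ∧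
      {w : UnitAddCircle | Ed d w = y} ∩ K = {y₁, y₂} ∧
      Filter.Tendsto ηm (nhdsWithin y (sideArc y (Set.Ioo (-ε) 0))) (nhds y₁) ∧
      Filter.Tendsto ηp (nhdsWithin y (sideArc y (Set.Ioo 0 ε))) (nhds y₂) :=
  stmt4_general d hd K hinv hnw y hy ε hε hε' ηm ηp hmc hpc hmsel hpsel
end

section
/- Let K ⊆ ℝ/ℤ be a non-empty compact set with E_d(K) = K and the non-wandering property. Then K is contained in a flower for E_d if and only if every critical value of K is regular (K is Sturmian-like). -/
/-- `η` is a preimage selector for `E_d`: it selects a `d`-th preimage of every point and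
has only finitely many discontinuities. -/
def IsPreimageSelector (d : ℕ) (η : UnitAddCircle → UnitAddCircle) : Prop :=
  (∀ x, Ed d (η x) = x) ∧ {x | ¬ ContinuousAt η x}.Finite


/-- A critical value `x` of `K` is regular: on each one-sided punctured neighborhood of `x`
there is a continuous inverse branch of `E_d` selecting, for points of `K`, the unique
`E_d`-preimage lying in `K`. -/
def IsRegularCrit (d : ℕ) (K : Set UnitAddCircle) (x : UnitAddCircle) : Prop :=
  x ∈ critVals d K ∧
  ∃ ε : ℝ, 0 < ε ∧ ε < 1 / 2 ∧
    ∃ ηm ηp : UnitAddCircle → UnitAddCircle,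
      ContinuousOn ηm (sideArc x (Set.Ioo (-ε) 0)) ∧
      ContinuousOn ηp (sideArc x (Set.Ioo 0 ε)) ∧
      (∀ z ∈ sideArc x (Set.Ioo (-ε) 0),
        Ed d (ηm z) = z ∧ (z ∈ K → {w : UnitAddCircle | Ed d w = z} ∩ K = {ηm z})) ∧
      (∀ z ∈ sideArc x (Set.Ioo 0 ε),
        Ed d (ηp z) = z ∧ (z ∈ K → {w : UnitAddCircle | Ed d w = z} ∩ K = {ηp z}))


/-!
If `η` is a flower and `η` is continuous at `z ∈ K`, then every `K`-preimage of `z`, being a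
limit of points `η (Ed d v)` with `v → z`, equals `η z`. Since `η` has only finitely many
discontinuities, `η` itself is a continuous inverse branch on both punctured sides of every
critical value.

Conversely, each regular critical value is isolated among critical values, and the set of
critical values is compact (fibres of `Ed d` are `1/d`-separated), hence finite. Pick `θ ∉ K`
and lift `K` to `A ⊆ (θ, θ + 1)`. On `A` the chosen `K`-preimage is `t ↦ (t + k t) / d`, with `k`
locally constant at non-critical points and constant on each side of critical ones; by
compactness finitely many cuts split `[θ, θ + 1]` into pieces on each of which `k` is constant
on `A`, and extending `k` over each piece yields a flower. Its range contains the chosen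
preimage of every point of `K`; the choice prefers periodic preimages, and every non-periodic
point of `K` is, by the non-wandering property, a limit of points of `K` off its own fibre,
which near a critical value are unique preimages of non-critical values.
-/

open Set Filter Topology Function

section Basic

variable {d : ℕ}

lemma Ed_coe (d : ℕ) (t : ℝ) : Ed d t = ((d * t : ℝ) : UnitAddCircle) := by
  rw [Ed, ← AddCircle.coe_nsmul, nsmul_eq_mul]

lemma Ed_add (d : ℕ) (a b : UnitAddCircle) : Ed d (a + b) = Ed d a + Ed d b := smul_add _ _ _

lemma Ed_sub (d : ℕ) (a b : UnitAddCircle) : Ed d (a - b) = Ed d a - Ed d b := smul_sub _ _ _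

lemma finite_setOf_Ed_eq_zero (hd : 0 < d) : {u : UnitAddCircle | Ed d u = 0}.Finite :=
  AddCircle.finite_torsion 1 hd

lemma one_div_le_norm_of_Ed_eq_zero (hd : 0 < d) {u : UnitAddCircle} (hu : Ed d u = 0)
    (hu0 : u ≠ 0) : 1 / d ≤ ‖u‖ := by
  have hfin : IsOfFinAddOrder u := isOfFinAddOrder_iff_nsmul_eq_zero.2 ⟨d, hd, hu⟩
  have hord : addOrderOf u ≤ d := Nat.le_of_dvd hd (addOrderOf_dvd_of_nsmul_eq_zero hu)
  have h1 := AddCircle.le_add_order_smul_norm_of_isOfFinAddOrder hfin hu0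
  rw [nsmul_eq_mul] at h1
  rw [div_le_iff₀' (by positivity)]
  calc (1 : ℝ) ≤ addOrderOf u * ‖u‖ := h1
    _ ≤ d * ‖u‖ := by gcongr

lemma one_div_le_dist_of_Ed_eq (hd : 0 < d) {w w' : UnitAddCircle} (h : Ed d w = Ed d w')
    (hne : w ≠ w') : 1 / d ≤ dist w w' := by
  rw [dist_eq_norm]
  exact one_div_le_norm_of_Ed_eq_zero hd (by rw [Ed_sub, h, sub_self]) (sub_ne_zero.2 hne)

lemma eq_of_Ed_eq_of_dist_lt (hd : 0 < d) {w w' : UnitAddCircle} (h : Ed d w = Ed d w')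
    (hdist : dist w w' < 1 / d) : w = w' := by
  by_contra hne
  exact (one_div_le_dist_of_Ed_eq hd h hne).not_gt hdist

lemma coe_one_div_ne_zero (hd : 2 ≤ d) : ((1 / d : ℝ) : UnitAddCircle) ≠ 0 := by
  have hpos : (0 : ℝ) < 1 / d := by positivity
  have hhalf : |(1 / d : ℝ)| ≤ |(1 : ℝ)| / 2 := by
    rw [abs_of_pos hpos, abs_one, one_div_le_one_div (by positivity) two_pos]
    exact_mod_cast hd
  rw [← norm_ne_zero_iff, (AddCircle.norm_coe_eq_abs_iff 1 one_ne_zero).2 hhalf, abs_of_pos hpos]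
  exact hpos.ne'

lemma exists_ne_Ed_eq (hd : 2 ≤ d) (z : UnitAddCircle) :
    ∃ w w', w ≠ w' ∧ Ed d w = z ∧ Ed d w' = z := by
  induction z using QuotientAddGroup.induction_on with | H t => ?_
  have hEd : Ed d ((t / d : ℝ) : UnitAddCircle) = t := Ed_coe_div (by omega) t
  refine ⟨_, _ + ((1 / d : ℝ) : UnitAddCircle), left_ne_add.2 (coe_one_div_ne_zero hd),
    hEd, ?_⟩
  rw [Ed_add, hEd, Ed_coe_div (by omega), AddCircle.coe_period, add_zero]

lemma sideArc_union_eq_ball_diff (x : UnitAddCircle) {ε : ℝ} (hε : ε ≤ 1 / 2) :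
    sideArc x (Ioo (-ε) 0) ∪ sideArc x (Ioo 0 ε) = Metric.ball x ε \ {x} := by
  have hnorm : ∀ t : ℝ, |t| ≤ 1 / 2 → ‖(t : UnitAddCircle)‖ = |t| := fun t ht =>
    (AddCircle.norm_coe_eq_abs_iff 1 one_ne_zero).2 (by simpa using ht)
  ext z
  simp only [sideArc, mem_union, mem_image, Set.mem_sdiff, Metric.mem_ball, mem_singleton_iff,
    dist_eq_norm]
  constructor
  · rintro (⟨t, ⟨ht1, ht2⟩, rfl⟩ | ⟨t, ⟨ht1, ht2⟩, rfl⟩) <;>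
    · have habs : |t| < ε := abs_lt.2 ⟨by linarith, by linarith⟩
      rw [add_sub_cancel_left, hnorm t (by linarith)]
      refine ⟨habs, fun h => ?_⟩
      rw [add_eq_left, ← norm_eq_zero, hnorm t (by linarith), abs_eq_zero] at h
      linarith
  · rintro ⟨hlt, hne⟩
    have ht := (AddCircle.equivIoc 1 (-(1 / 2)) (z - x)).2
    set t : ℝ := (AddCircle.equivIoc 1 (-(1 / 2)) (z - x) : ℝ)
    have hzt : (t : UnitAddCircle) = z - x := AddCircle.coe_equivIoc
    have habs : |t| < ε := by
      rw [← hnorm t (abs_le.2 ⟨by linarith [ht.1], by linarith [ht.2]⟩), hzt]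
      exact hlt
    have ht0 : t ≠ 0 := by
      intro h0
      exact hne (sub_eq_zero.1 (by rw [← hzt, h0, AddCircle.coe_zero]))
    have hz : x + (t : UnitAddCircle) = z := by rw [hzt, add_sub_cancel]
    rcases ht0.lt_or_gt with hneg | hpos
    · exact Or.inl ⟨t, ⟨by linarith [neg_abs_le t], hneg⟩, hz⟩
    · exact Or.inr ⟨t, ⟨hpos, by linarith [le_abs_self t]⟩, hz⟩

lemma continuous_coe_unitAddCircle : Continuous ((↑) : ℝ → UnitAddCircle) :=
  AddCircle.continuous_mk' 1

lemma coe_mem_sideArc {s t : ℝ} {S : Set ℝ} (h : t - s ∈ S) :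
    (t : UnitAddCircle) ∈ sideArc s S :=
  ⟨t - s, h, by simp only [← AddCircle.coe_add, add_sub_cancel]⟩

end Basic

section Forward

variable {d : ℕ} {K : Set UnitAddCircle} {η : UnitAddCircle → UnitAddCircle}

lemma eq_of_mem_closure_range (hsel : ∀ x, Ed d (η x) = x) {w : UnitAddCircle}
    (hc : ContinuousAt η (Ed d w)) (hw : w ∈ closure (range η)) : w = η (Ed d w) := by
  have := mem_closure_iff_nhdsWithin_neBot.1 hw
  have hlim : Tendsto (η ∘ Ed d) (𝓝[range η] w) (𝓝 (η (Ed d w))) :=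
    (hc.comp (continuous_Ed d).continuousAt).tendsto.mono_left nhdsWithin_le_nhds
  have hid : η ∘ Ed d =ᶠ[𝓝[range η] w] id := by
    filter_upwards [self_mem_nhdsWithin] with v ⟨x, hx⟩
    rw [← hx, comp_apply, hsel, id]
  exact tendsto_nhds_unique (tendsto_id.mono_left nhdsWithin_le_nhds) (hlim.congr' hid)

lemma setOf_Ed_eq_inter_eq_singleton (hsel : ∀ x, Ed d (η x) = x)
    (hcl : K ⊆ closure (range η)) (hsurj : K ⊆ Ed d '' K) {z : UnitAddCircle} (hz : z ∈ K)
    (hc : ContinuousAt η z) : {w | Ed d w = z} ∩ K = {η z} := by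
  have hK : ∀ w ∈ K, Ed d w = z → w = η z := fun w hw hwz => by
    subst hwz
    exact eq_of_mem_closure_range hsel hc (hcl hw)
  obtain ⟨w, hw, hwz⟩ := hsurj hz
  ext v
  constructor
  · rintro ⟨hvz, hv⟩
    exact hK v hv hvz
  · rintro rfl
    exact ⟨hsel z, hK w hw hwz ▸ hw⟩

theorem isRegularCrit_of_isPreimageSelector (hη : IsPreimageSelector d η)
    (hcl : K ⊆ closure (range η)) (hsurj : K ⊆ Ed d '' K) {x : UnitAddCircle}
    (hx : x ∈ critVals d K) : IsRegularCrit d K x := by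
  obtain ⟨hsel, hfin⟩ := hη
  obtain ⟨ε, hε, hball⟩ := Metric.isOpen_iff.1 (hfin.sdiff (t := {x})).isClosed.isOpen_compl x
    fun h => h.2 rfl
  set ε' := min ε (1 / 4)
  have hcont : ∀ z ∈ sideArc x (Ioo (-ε') 0) ∪ sideArc x (Ioo 0 ε'), ContinuousAt η z := by
    rw [sideArc_union_eq_ball_diff x ((min_le_right _ _).trans (by norm_num))]
    rintro z ⟨hz, hzx⟩
    by_contra h
    exact hball (Metric.ball_subset_ball (min_le_left _ _) hz) ⟨h, hzx⟩
  refine ⟨hx, ε', lt_min hε (by norm_num), (min_le_right _ _).trans_lt (by norm_num), η, η,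
    fun z hz => (hcont z (Or.inl hz)).continuousWithinAt,
    fun z hz => (hcont z (Or.inr hz)).continuousWithinAt, fun z hz => ⟨hsel z, fun hzK => ?_⟩,
    fun z hz => ⟨hsel z, fun hzK => ?_⟩⟩
  · exact setOf_Ed_eq_inter_eq_singleton hsel hcl hsurj hzK (hcont z (Or.inl hz))
  · exact setOf_Ed_eq_inter_eq_singleton hsel hcl hsurj hzK (hcont z (Or.inr hz))

end Forward

section Critical

variable {d : ℕ} {K : Set UnitAddCircle}

lemma notMem_critVals_of_eq_singleton {z v : UnitAddCircle}
    (h : {w | Ed d w = z} ∩ K = {v}) : z ∉ critVals d K := by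
  rintro ⟨-, y, hy, y', hy', hne, hyz, hy'z⟩
  have hyv : y ∈ ({v} : Set UnitAddCircle) := h ▸ ⟨hyz, hy⟩
  have hy'v : y' ∈ ({v} : Set UnitAddCircle) := h ▸ ⟨hy'z, hy'⟩
  exact hne (hyv.trans hy'v.symm)

lemma eq_of_Ed_eq_of_notMem_critVals {w w' : UnitAddCircle} (hw : w ∈ K) (hw' : w' ∈ K)
    (h : Ed d w = Ed d w') (hK : Ed d w ∈ K) (hnc : Ed d w ∉ critVals d K) : w = w' := by
  by_contra hne
  exact hnc ⟨hK, w, hw, w', hw', hne, rfl, h.symm⟩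

lemma eventually_notMem_critVals {x : UnitAddCircle} (hx : IsRegularCrit d K x) :
    ∀ᶠ z in 𝓝[≠] x, z ∉ critVals d K := by
  obtain ⟨-, ε, hε, hε2, ηm, ηp, -, -, hm, hp⟩ := hx
  filter_upwards [sdiff_mem_nhdsWithin_compl (Metric.ball_mem_nhds x hε) {x}] with z hz hzc
  rw [← sideArc_union_eq_ball_diff x hε2.le] at hz
  rcases hz with hz | hz
  · exact notMem_critVals_of_eq_singleton ((hm z hz).2 hzc.1) hzc
  · exact notMem_critVals_of_eq_singleton ((hp z hz).2 hzc.1) hzc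

lemma isCompact_critVals (hd : 0 < d) (hK : IsCompact K) : IsCompact (critVals d K) := by
  set P : Set (UnitAddCircle × UnitAddCircle) :=
    (K ×ˢ K) ∩ {p | Ed d p.1 = Ed d p.2 ∧ 1 / d ≤ dist p.1 p.2}
  have hP : IsCompact P := (hK.prod hK).inter_right <|
    (isClosed_eq ((continuous_Ed d).comp continuous_fst)
      ((continuous_Ed d).comp continuous_snd)).inter (isClosed_le continuous_const continuous_dist)
  have hcrit : critVals d K = K ∩ (fun p => Ed d p.1) '' P := by
    ext x
    constructor
    · rintro ⟨hx, y, hy, y', hy', hne, rfl, hy'x⟩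
      exact ⟨hx, (y, y'), ⟨⟨hy, hy'⟩, hy'x.symm, one_div_le_dist_of_Ed_eq hd hy'x.symm hne⟩, rfl⟩
    · rintro ⟨hx, ⟨y, y'⟩, ⟨⟨hy, hy'⟩, hyy', hdist⟩, rfl⟩
      refine ⟨hx, y, hy, y', hy', fun h => ?_, rfl, hyy'.symm⟩
      rw [h, dist_self] at hdist
      exact (one_div_pos.2 (Nat.cast_pos.2 hd)).not_ge hdist
  rw [hcrit]
  exact (hP.image (continuous_Ed d |>.comp continuous_fst)).inter_left hK.isClosed

lemma critVals_finite (hd : 0 < d) (hK : IsCompact K)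
    (hreg : ∀ x ∈ critVals d K, IsRegularCrit d K x) : (critVals d K).Finite :=
  (isCompact_critVals hd hK).finite <| isDiscrete_iff_nhdsNE.2 fun x hx =>
    inf_principal_eq_bot.2 (eventually_notMem_critVals (hreg x hx))

lemma exists_coe_notMem (hd : 2 ≤ d)
    (hreg : ∀ x ∈ critVals d K, IsRegularCrit d K x) : ∃ θ : ℝ, (θ : UnitAddCircle) ∉ K := by
  by_contra! hK
  have hall : ∀ z, z ∈ K := fun z => by
    induction z using QuotientAddGroup.induction_on with | H t => exact hK t
  obtain ⟨w, w', hne, hw, hw'⟩ := exists_ne_Ed_eq hd 0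
  obtain ⟨-, ε, hε, -, -, ηp, -, -, -, hp⟩ := hreg 0 ⟨hall 0, w, hall w, w', hall w', hne, hw, hw'⟩
  have hz : ((ε / 2 : ℝ) : UnitAddCircle) ∈ sideArc 0 (Ioo 0 ε) :=
    ⟨ε / 2, ⟨by linarith, by linarith⟩, zero_add _⟩
  obtain ⟨v, v', hvv', hv, hv'⟩ := exists_ne_Ed_eq hd ((ε / 2 : ℝ) : UnitAddCircle)
  exact notMem_critVals_of_eq_singleton ((hp _ hz).2 (hall _))
    ⟨hall _, v, hall v, v', hall v', hvv', hv, hv'⟩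

end Critical

section KPreimage

variable {d : ℕ} {K : Set UnitAddCircle}

open Classical in
/-- A preimage of `z` in `K`, periodic whenever `z` has a periodic preimage in `K`. Periodic
preimages are unique, so this choice puts every periodic point of `K` in the image. -/
noncomputable def kPreimage (d : ℕ) (K : Set UnitAddCircle) (z : UnitAddCircle) :
    UnitAddCircle :=
  if h : ∃ w ∈ K ∩ periodicPts (Ed d), Ed d w = z then h.choose
  else if h : ∃ w ∈ K, Ed d w = z then h.choose else z

lemma kPreimage_spec {z : UnitAddCircle} (hz : z ∈ Ed d '' K) :
    kPreimage d K z ∈ K ∧ Ed d (kPreimage d K z) = z := by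
  unfold kPreimage
  split_ifs with hper hK
  · exact ⟨hper.choose_spec.1.1, hper.choose_spec.2⟩
  · exact hK.choose_spec
  · exact absurd hz hK

lemma kPreimage_Ed_of_mem_periodicPts {w : UnitAddCircle} (hw : w ∈ K)
    (hper : w ∈ periodicPts (Ed d)) : kPreimage d K (Ed d w) = w := by
  have h : ∃ w' ∈ K ∩ periodicPts (Ed d), Ed d w' = Ed d w := ⟨w, ⟨hw, hper⟩, rfl⟩
  rw [kPreimage, dif_pos h]
  exact (bijOn_periodicPts (Ed d)).injOn h.choose_spec.1.2 hper h.choose_spec.2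

lemma kPreimage_Ed_of_notMem_critVals {w : UnitAddCircle} (hw : w ∈ K) (hK : Ed d w ∈ K)
    (hnc : Ed d w ∉ critVals d K) : kPreimage d K (Ed d w) = w := by
  obtain ⟨hmem, hEd⟩ := kPreimage_spec ⟨w, hw, rfl⟩
  exact eq_of_Ed_eq_of_notMem_critVals hmem hw hEd (by rwa [hEd]) (by rwa [hEd])

lemma kPreimage_eq_of_eq_singleton {z v : UnitAddCircle} (h : {w | Ed d w = z} ∩ K = {v}) :
    kPreimage d K z = v := by
  have hv : v ∈ {w | Ed d w = z} ∩ K := h ▸ rfl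
  obtain ⟨hmem, hEd⟩ := kPreimage_spec ⟨v, hv.2, hv.1⟩
  have hz : kPreimage d K z ∈ {w | Ed d w = z} ∩ K := ⟨hEd, hmem⟩
  rwa [h] at hz

lemma continuousWithinAt_kPreimage (hK : IsCompact K) (hsurj : K ⊆ Ed d '' K)
    {z : UnitAddCircle} (hz : z ∈ K) (hnc : z ∉ critVals d K) :
    ContinuousWithinAt (kPreimage d K) K z := by
  refine hK.tendsto_nhds_of_unique_mapClusterPt
    (eventually_mem_nhdsWithin.mono fun z' hz' => (kPreimage_spec (hsurj hz')).1) ?_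
  intro y hy hcl
  have hEd : MapClusterPt (Ed d y) (𝓝[K] z) (Ed d ∘ kPreimage d K) :=
    hcl.tendsto_comp (continuous_Ed d).continuousAt
  have hid : Ed d ∘ kPreimage d K =ᶠ[𝓝[K] z] id :=
    eventually_mem_nhdsWithin.mono fun z' hz' => (kPreimage_spec (hsurj hz')).2
  have hyz : Ed d y = z := by
    rw [MapClusterPt, map_congr hid, map_id] at hEd
    exact eq_of_nhds_neBot (hEd.mono nhdsWithin_le_nhds)
  obtain ⟨hmem, hspec⟩ := kPreimage_spec (hsurj hz)
  exact eq_of_Ed_eq_of_notMem_critVals hy hmem (hyz.trans hspec.symm) (hyz ▸ hz) (hyz ▸ hnc)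

end KPreimage

section Coverage

variable {d : ℕ} {K : Set UnitAddCircle}

lemma eventually_mem_image_kPreimage (hinv : Ed d '' K = K) {w : UnitAddCircle}
    (hreg : IsRegularCrit d K (Ed d w)) :
    ∀ᶠ v in 𝓝 w, v ∈ K → Ed d v ≠ Ed d w → v ∈ kPreimage d K '' K := by
  have hnc := (continuous_Ed d).continuousAt.eventually
    (eventually_nhdsWithin_iff.1 (eventually_notMem_critVals hreg))
  filter_upwards [hnc] with v hv hvK hne
  have hEv : Ed d v ∈ K := hinv ▸ mem_image_of_mem _ hvK
  exact ⟨Ed d v, hEv, kPreimage_Ed_of_notMem_critVals hvK hEv (hv hne)⟩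

lemma mem_closure_setOf_Ed_ne (hd : 0 < d) (hfwd : MapsTo (Ed d) K K)
    (hnw : NonWanderingOn d K) {w : UnitAddCircle} (hw : w ∈ K)
    (hper : w ∉ periodicPts (Ed d)) : w ∈ closure {v ∈ K | Ed d v ≠ Ed d w} := by
  refine Metric.mem_closure_iff.2 fun ε hε => ?_
  obtain ⟨y, hy, n, hn, hwy, hwn⟩ := hnw w hw (min ε (1 / d)) (lt_min hε (by positivity))
  by_cases hyw : Ed d y = Ed d w
  · obtain rfl : y = w := eq_of_Ed_eq_of_dist_lt hd hyw
      (by rw [dist_comm]; exact hwy.trans_le (min_le_right _ _))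
    refine ⟨(Ed d)^[n] y, ⟨hfwd.iterate n hy, fun h => hper ?_⟩, hwn.trans_le (min_le_left _ _)⟩
    exact mk_mem_periodicPts hn <| eq_of_Ed_eq_of_dist_lt hd h
      (by rw [dist_comm]; exact hwn.trans_le (min_le_right _ _))
  · exact ⟨y, ⟨hy, hyw⟩, hwy.trans_le (min_le_left _ _)⟩

lemma subset_closure_image_kPreimage (hd : 0 < d) (hinv : Ed d '' K = K)
    (hnw : NonWanderingOn d K) (hreg : ∀ x ∈ critVals d K, IsRegularCrit d K x) :
    K ⊆ closure (kPreimage d K '' K) := by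
  intro w hw
  have hfwd : MapsTo (Ed d) K K := fun v hv => hinv ▸ mem_image_of_mem _ hv
  by_cases hnc : Ed d w ∈ critVals d K
  swap
  · exact subset_closure ⟨_, hfwd hw, kPreimage_Ed_of_notMem_critVals hw (hfwd hw) hnc⟩
  by_cases hper : w ∈ periodicPts (Ed d)
  · exact subset_closure ⟨_, hfwd hw, kPreimage_Ed_of_mem_periodicPts hw hper⟩
  have hfreq := mem_closure_iff_frequently.1 (mem_closure_setOf_Ed_ne hd hfwd hnw hw hper)
  refine mem_closure_iff_frequently.2 <|
    (hfreq.and_eventually (eventually_mem_image_kPreimage hinv (hreg _ hnc))).mono ?_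
  rintro v ⟨⟨hvK, hne⟩, hv⟩
  exact hv hvK hne

end Coverage

section Branch

variable {d : ℕ} {K : Set UnitAddCircle}

/-- On the lift of `K`, `kPreimage` is `t ↦ (t + k) / d` for an integer `k` that is constant
near most points; `branchOffset` records the class of `k / d`, a `d`-torsion point. -/
noncomputable def branchOffset (d : ℕ) (K : Set UnitAddCircle) (t : ℝ) : UnitAddCircle :=
  kPreimage d K t - ((t / d : ℝ) : UnitAddCircle)

lemma Ed_branchOffset (hd : 0 < d) {t : ℝ} (ht : (t : UnitAddCircle) ∈ Ed d '' K) :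
    Ed d (branchOffset d K t) = 0 := by
  rw [branchOffset, Ed_sub, (kPreimage_spec ht).2, Ed_coe_div hd, sub_self]

lemma sub_coe_div_eq_of_continuousOn (hd : 0 < d) {I : Set ℝ} (hI : IsPreconnected I)
    {σ : ℝ → UnitAddCircle} (hσ : ContinuousOn σ I) (hsec : ∀ t ∈ I, Ed d (σ t) = t)
    {a b : ℝ} (ha : a ∈ I) (hb : b ∈ I) :
    σ a - ((a / d : ℝ) : UnitAddCircle) = σ b - ((b / d : ℝ) : UnitAddCircle) :=
  hI.constant_of_mapsTo (finite_setOf_Ed_eq_zero hd).isDiscrete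
    (hσ.sub (continuous_coe_unitAddCircle.comp (continuous_id.div_const _)).continuousOn)
    (fun t ht => show Ed d (σ t - ((t / d : ℝ) : UnitAddCircle)) = 0 by
      rw [Ed_sub, hsec t ht, Ed_coe_div hd, sub_self]) ha hb

lemma branchOffset_eq_of_sideArc (hd : 0 < d) {s l u : ℝ} {η : UnitAddCircle → UnitAddCircle}
    (hη : ContinuousOn η (sideArc s (Ioo l u)))
    (hsec : ∀ z ∈ sideArc s (Ioo l u),
      Ed d (η z) = z ∧ (z ∈ K → {w | Ed d w = z} ∩ K = {η z}))
    {a b : ℝ} (ha : a ∈ Ioo (s + l) (s + u)) (hb : b ∈ Ioo (s + l) (s + u))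
    (haK : (a : UnitAddCircle) ∈ K) (hbK : (b : UnitAddCircle) ∈ K) :
    branchOffset d K a = branchOffset d K b := by
  have harc : ∀ t ∈ Ioo (s + l) (s + u), (t : UnitAddCircle) ∈ sideArc s (Ioo l u) :=
    fun t ht => coe_mem_sideArc ⟨by linarith [ht.1], by linarith [ht.2]⟩
  rw [branchOffset, branchOffset, kPreimage_eq_of_eq_singleton ((hsec _ (harc a ha)).2 haK),
    kPreimage_eq_of_eq_singleton ((hsec _ (harc b hb)).2 hbK)]
  exact sub_coe_div_eq_of_continuousOn hd isPreconnected_Ioo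
    (hη.comp continuous_coe_unitAddCircle.continuousOn harc)
    (fun t ht => (hsec _ (harc t ht)).1) ha hb

lemma eventually_branchOffset_eq (hd : 0 < d) (hK : IsCompact K) (hsurj : K ⊆ Ed d '' K)
    {s : ℝ} (hs : (s : UnitAddCircle) ∈ K) (hnc : (s : UnitAddCircle) ∉ critVals d K) :
    ∀ᶠ t in 𝓝[(↑) ⁻¹' K] s, branchOffset d K t = branchOffset d K s := by
  have hcont : ContinuousWithinAt (branchOffset d K) ((↑) ⁻¹' K) s :=
    ((continuousWithinAt_kPreimage hK hsurj hs hnc).comp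
      continuous_coe_unitAddCircle.continuousWithinAt (mapsTo_preimage _ _)).sub
      (continuous_coe_unitAddCircle.comp (continuous_id.div_const _)).continuousWithinAt
  filter_upwards [hcont.eventually (Metric.ball_mem_nhds _ (one_div_pos.2 (Nat.cast_pos.2 hd))),
    self_mem_nhdsWithin] with t ht htK
  exact eq_of_Ed_eq_of_dist_lt hd
    (by rw [Ed_branchOffset hd (hsurj htK), Ed_branchOffset hd (hsurj hs)]) ht

lemma exists_branchOffset_eq_near (hd : 0 < d) (hK : IsCompact K) (hsurj : K ⊆ Ed d '' K)
    (hreg : ∀ x ∈ critVals d K, IsRegularCrit d K x) {s : ℝ} (hs : (s : UnitAddCircle) ∈ K) :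
    ∃ δ > 0, ∀ a ∈ Ioo (s - δ) (s + δ), ∀ b ∈ Ioo (s - δ) (s + δ),
      (a : UnitAddCircle) ∈ K → (b : UnitAddCircle) ∈ K →
      (s ∈ uIcc a b → (s : UnitAddCircle) ∉ critVals d K) →
      branchOffset d K a = branchOffset d K b := by
  by_cases hc : (s : UnitAddCircle) ∈ critVals d K
  · obtain ⟨-, ε, hε, -, ηm, ηp, hcm, hcp, hm, hp⟩ := hreg _ hc
    refine ⟨ε, hε, fun a ha b hb haK hbK hab => ?_⟩
    have hside : (a < s ∧ b < s) ∨ (s < a ∧ s < b) := by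
      have hns : s ∉ uIcc a b := fun h => hab h hc
      simp only [mem_uIcc, not_or, not_and_or, not_le] at hns
      obtain ⟨h1 | h1, h2 | h2⟩ := hns
      · exact Or.inr ⟨h1, h2⟩
      · exact (h1.asymm h2).elim
      · exact (h1.asymm h2).elim
      · exact Or.inl ⟨h2, h1⟩
    rcases hside with ⟨has, hbs⟩ | ⟨has, hbs⟩
    · exact branchOffset_eq_of_sideArc hd hcm hm (u := 0) ⟨by linarith [ha.1], by linarith⟩
        ⟨by linarith [hb.1], by linarith⟩ haK hbK
    · exact branchOffset_eq_of_sideArc hd hcp hp (l := 0) ⟨by linarith, by linarith [ha.2]⟩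
        ⟨by linarith, by linarith [hb.2]⟩ haK hbK
  · obtain ⟨δ, hδ, hball⟩ :=
      Metric.mem_nhdsWithin_iff.1 (eventually_branchOffset_eq hd hK hsurj hs hc)
    refine ⟨δ, hδ, fun a ha b hb haK hbK _ => ?_⟩
    rw [← Real.ball_eq_Ioo] at ha hb
    exact (hball ⟨ha, haK⟩).trans (hball ⟨hb, hbK⟩).symm

end Branch

section RealLine

variable {α : Type*}

/-- Near each `s ∈ A`, `f` is constant on `A`, or only on each side of `s` when `s ∈ C`.
`Disjoint (uIcc a b) E` says that `a` and `b` lie in the same component of `ℝ \ E`. -/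
lemma exists_finite_cuts {A C : Set ℝ} (hA : IsCompact A) (hC : C.Finite) {f : ℝ → α}
    (hf : ∀ s ∈ A, ∃ δ > 0, ∀ a ∈ A ∩ Ioo (s - δ) (s + δ), ∀ b ∈ A ∩ Ioo (s - δ) (s + δ),
      (s ∈ uIcc a b → s ∉ C) → f a = f b) :
    ∃ E : Set ℝ, E.Finite ∧ ∀ a ∈ A, ∀ b ∈ A, Disjoint (uIcc a b) E → f a = f b := by
  choose! δ hδ hfδ using hf
  obtain ⟨S, hSA, hSfin, hcov⟩ := hA.elim_finite_subcover_image
    (c := fun s => Ioo (s - δ s) (s + δ s)) (fun _ _ => isOpen_Ioo)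
    (fun s hs => mem_biUnion hs ⟨by linarith [hδ s hs], by linarith [hδ s hs]⟩)
  refine ⟨C ∪ ⋃ s ∈ S, {s - δ s, s + δ s}, hC.union (hSfin.biUnion fun _ _ => toFinite _),
    fun a ha b hb hab => ?_⟩
  obtain ⟨s, hs, has⟩ := mem_iUnion₂.1 (hcov ha)
  have hcut : ∀ e ∈ ({s - δ s, s + δ s} : Set ℝ), e ∉ uIcc a b := fun e he heab =>
    disjoint_left.1 hab heab (Or.inr (mem_biUnion hs he))
  have hbs : b ∈ Ioo (s - δ s) (s + δ s) := by
    constructor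
    · by_contra! h
      exact hcut _ (Or.inl rfl) (mem_uIcc.2 (Or.inr ⟨h, has.1.le⟩))
    · by_contra! h
      exact hcut _ (Or.inr rfl) (mem_uIcc.2 (Or.inl ⟨has.2.le, h⟩))
  exact hfδ s (hSA hs) a ⟨ha, has⟩ b ⟨hb, hbs⟩ fun hsab hsC =>
    disjoint_left.1 hab hsab (Or.inl hsC)

lemma exists_extension_eventually_eq {A E : Set ℝ} (hA : A.Nonempty) (hE : E.Finite)
    {f : ℝ → α} (hf : ∀ a ∈ A, ∀ b ∈ A, Disjoint (uIcc a b) E → f a = f b) :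
    ∃ g : ℝ → α, EqOn g f A ∧ range g ⊆ f '' A ∧ ∀ t ∉ E, ∀ᶠ t' in 𝓝 t, g t' = g t := by
  classical
  obtain ⟨a₀, ha₀⟩ := hA
  have htrans : ∀ {a b c : ℝ}, Disjoint (uIcc a b) E → Disjoint (uIcc b c) E →
      Disjoint (uIcc a c) E :=
    fun h1 h2 => (h1.union_left h2).mono_left uIcc_subset_uIcc_union_uIcc
  let g : ℝ → α := fun t => if t ∈ A then f t
    else if h : ∃ a ∈ A, Disjoint (uIcc a t) E then f h.choose else f a₀
  have hg : ∀ t, ∀ a ∈ A, Disjoint (uIcc a t) E → g t = f a := by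
    intro t a ha hat
    by_cases htA : t ∈ A
    · simp only [g, if_pos htA]
      exact hf t htA a ha (uIcc_comm a t ▸ hat)
    · have h : ∃ a ∈ A, Disjoint (uIcc a t) E := ⟨a, ha, hat⟩
      simp only [g, if_neg htA, dif_pos h]
      exact hf _ h.choose_spec.1 a ha (htrans h.choose_spec.2 (uIcc_comm a t ▸ hat))
  refine ⟨g, fun a ha => if_pos ha, ?_, fun t ht => ?_⟩
  · rintro _ ⟨t, rfl⟩
    simp only [g]
    split_ifs with htA h
    exacts [⟨t, htA, rfl⟩, ⟨_, h.choose_spec.1, rfl⟩, ⟨a₀, ha₀, rfl⟩]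
  obtain ⟨ε, hε, hball⟩ := Metric.isOpen_iff.1 hE.isClosed.isOpen_compl t ht
  filter_upwards [Metric.ball_mem_nhds t hε] with t' ht'
  have htt' : Disjoint (uIcc t t') E := disjoint_compl_left.mono_left <|
    ((convex_ball t ε).ordConnected.uIcc_subset
      (Metric.mem_ball_self hε) ht').trans hball
  by_cases h : ∃ a ∈ A, Disjoint (uIcc a t) E
  · obtain ⟨a, ha, hat⟩ := h
    rw [hg t a ha hat, hg t' a ha (htrans hat htt')]
  · have h' : ¬ ∃ a ∈ A, Disjoint (uIcc a t') E := fun ⟨a, ha, hat'⟩ =>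
      h ⟨a, ha, htrans hat' (uIcc_comm t t' ▸ htt')⟩
    have htA : t ∉ A := fun htA =>
      h ⟨t, htA, by rw [uIcc_self]; exact disjoint_singleton_left.2 ht⟩
    have ht'A : t' ∉ A := fun ht'A => h ⟨t', ht'A, uIcc_comm t t' ▸ htt'⟩
    simp only [g, if_neg htA, if_neg ht'A, dif_neg h, dif_neg h']

end RealLine

section Flower

variable {d : ℕ} {K : Set UnitAddCircle}

lemma isPreimageSelector_liftIco (hd : 0 < d) (θ : ℝ) {g : ℝ → UnitAddCircle} {E : Set ℝ}
    (hE : E.Finite) (hg0 : ∀ t, Ed d (g t) = 0) (hgE : ∀ t ∉ E, ∀ᶠ t' in 𝓝 t, g t' = g t) :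
    IsPreimageSelector d
      (AddCircle.liftIco 1 θ fun t => ((t / d : ℝ) : UnitAddCircle) + g t) := by
  refine ⟨fun x => ?_,
    ((hE.image ((↑) : ℝ → UnitAddCircle)).insert (θ : UnitAddCircle)).subset fun x hx => ?_⟩
  · change Ed d (((AddCircle.equivIco 1 θ x / d : ℝ) : UnitAddCircle) +
      g (AddCircle.equivIco 1 θ x)) = x
    rw [Ed_add, Ed_coe_div hd, hg0, add_zero, AddCircle.coe_equivIco]
  by_contra hxE
  simp only [mem_insert_iff, mem_image, not_or, not_exists, not_and] at hxE
  set t : ℝ := (AddCircle.equivIco 1 θ x : ℝ)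
  have ht : t ∉ E := fun ht => hxE.2 t ht AddCircle.coe_equivIco
  have hlocal : Continuous fun t' : ℝ => ((t' / d : ℝ) : UnitAddCircle) + g t :=
    (continuous_coe_unitAddCircle.comp (continuous_id.div_const _)).add continuous_const
  have hF : ContinuousAt (fun t => ((t / d : ℝ) : UnitAddCircle) + g t) t :=
    hlocal.continuousAt.congr_of_eventuallyEq ((hgE t ht).mono fun t' h => by simp only [h])
  exact hx (hF.comp (continuous_subtype_val.continuousAt.comp
    (AddCircle.continuousAt_equivIco 1 θ hxE.1)))

lemma exists_extension_branchOffset (hd : 0 < d) (hKne : K.Nonempty) (hKc : IsCompact K)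
    (hsurj : K ⊆ Ed d '' K) (hreg : ∀ x ∈ critVals d K, IsRegularCrit d K x) {θ : ℝ}
    (hθ : (θ : UnitAddCircle) ∉ K) :
    ∃ g : ℝ → UnitAddCircle, ∃ E : Set ℝ, E.Finite ∧ (∀ t, Ed d (g t) = 0) ∧
      (∀ t ∉ E, ∀ᶠ t' in 𝓝 t, g t' = g t) ∧
      ∀ t ∈ Ico θ (θ + 1), (t : UnitAddCircle) ∈ K → g t = branchOffset d K t := by
  set A : Set ℝ := Icc θ (θ + 1) ∩ (↑) ⁻¹' K
  have hAIco : A ⊆ Ico θ (θ + 1) := fun t ⟨⟨h1, h2⟩, htK⟩ => ⟨h1, h2.lt_of_ne <| by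
    rintro rfl
    exact hθ (by rwa [mem_preimage, AddCircle.coe_add, AddCircle.coe_period, add_zero] at htK)⟩
  have hAne : A.Nonempty := by
    obtain ⟨x, hx⟩ := hKne
    exact ⟨_, Ico_subset_Icc_self (AddCircle.equivIco 1 θ x).2,
      by rwa [mem_preimage, AddCircle.coe_equivIco]⟩
  have hC : (A ∩ (↑) ⁻¹' critVals d K).Finite :=
    ((critVals_finite hd hKc hreg).image fun x => (AddCircle.equivIco 1 θ x : ℝ)).subset
      fun t ht => ⟨t, ht.2, AddCircle.equivIco_coe_of_mem (hAIco ht.1)⟩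
  obtain ⟨E, hE, hEf⟩ := exists_finite_cuts (f := branchOffset d K)
    (isCompact_Icc.inter_right (hKc.isClosed.preimage continuous_coe_unitAddCircle)) hC
    fun s hs => (exists_branchOffset_eq_near hd hKc hsurj hreg hs.2).imp fun δ ⟨hδ, h⟩ =>
      ⟨hδ, fun a ha b hb hab => h a ha.2 b hb.2 ha.1.2 hb.1.2 fun hsab hc => hab hsab ⟨hs, hc⟩⟩
  obtain ⟨g, hgf, hgA, hgE⟩ := exists_extension_eventually_eq hAne hE hEf
  refine ⟨g, E, hE, fun t => ?_, hgE, fun t ht htK => hgf ⟨Ico_subset_Icc_self ht, htK⟩⟩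
  obtain ⟨a, ha, hga⟩ := hgA ⟨t, rfl⟩
  rw [← hga, Ed_branchOffset hd (hsurj ha.2)]

theorem exists_isPreimageSelector_of_forall_isRegularCrit (hd : 2 ≤ d) (hKne : K.Nonempty)
    (hKc : IsCompact K) (hinv : Ed d '' K = K) (hnw : NonWanderingOn d K)
    (hreg : ∀ x ∈ critVals d K, IsRegularCrit d K x) :
    ∃ η, IsPreimageSelector d η ∧ K ⊆ closure (range η) := by
  have hd0 : 0 < d := by omega
  obtain ⟨θ, hθ⟩ := exists_coe_notMem hd hreg
  obtain ⟨g, E, hE, hg0, hgE, hgK⟩ :=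
    exists_extension_branchOffset hd0 hKne hKc hinv.symm.subset hreg hθ
  refine ⟨_, isPreimageSelector_liftIco hd0 θ hE hg0 hgE,
    (subset_closure_image_kPreimage hd0 hinv hnw hreg).trans (closure_mono ?_)⟩
  rintro _ ⟨x, hx, rfl⟩
  refine ⟨x, ?_⟩
  change ((AddCircle.equivIco 1 θ x / d : ℝ) : UnitAddCircle) + g (AddCircle.equivIco 1 θ x) = _
  rw [hgK _ (AddCircle.equivIco 1 θ x).2 (by rwa [AddCircle.coe_equivIco]), branchOffset,
    AddCircle.coe_equivIco, add_sub_cancel]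

end Flower

theorem stmt6 (d : ℕ) (hd : 2 ≤ d) (K : Set UnitAddCircle)
    (hKne : K.Nonempty) (hKc : IsCompact K) (hinv : Ed d '' K = K)
    (hnw : NonWanderingOn d K) :
    (∃ η : UnitAddCircle → UnitAddCircle,
        IsPreimageSelector d η ∧ K ⊆ closure (Set.range η)) ↔
    (∀ x ∈ critVals d K, IsRegularCrit d K x) :=
  ⟨fun ⟨_, hη, hcl⟩ _ hx => isRegularCrit_of_isPreimageSelector hη hcl hinv.symm.subset hx,
    exists_isPreimageSelector_of_forall_isRegularCrit hd hKne hKc hinv hnw⟩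
end

section
/- For a deck-shuffler IET T, a point x ∈ [0,1) is periodic with minimal period n if and only if its symbolic itinerary with respect to the partition {A, B} (the sequence (χ_B(T^k x))_{k≥0}) is periodic with minimal period n. -/
/-- The `i`-th interval `A_i` of a deck-shuffler IET, determined by the lengths `lA`. -/
def petalA (m : ℕ) (lA : Fin m → ℝ) (i : Fin m) : Set ℝ :=
  Set.Ico (∑ j ∈ Finset.Iio i, lA j) ((∑ j ∈ Finset.Iio i, lA j) + lA i)

/-- The `i`-th interval `B_i` of a deck-shuffler IET. -/
def petalB (m : ℕ) (lA lB : Fin m → ℝ) (i : Fin m) : Set ℝ :=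
  Set.Ico ((∑ j, lA j) + ∑ j ∈ Finset.Iio i, lB j)
    (((∑ j, lA j) + ∑ j ∈ Finset.Iio i, lB j) + lB i)

/-- `A = A_1 ∪ … ∪ A_m`. -/
def setA (m : ℕ) (lA : Fin m → ℝ) : Set ℝ := ⋃ i, petalA m lA i

/-- `B = B_1 ∪ … ∪ B_m`. -/
def setB (m : ℕ) (lA lB : Fin m → ℝ) : Set ℝ := ⋃ i, petalB m lA lB i

/-- `T` is the `2m`-interval deck-shuffler IET with length data `lA, lB`:
the intervals `A_1 < … < A_m < B_1 < … < B_m` have positive lengths summing to `1`,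
and `T x = x + |B_1| + … + |B_i|` on `A_i`, `T x = x − |A_i| − … − |A_m|` on `B_i`
(so the image order is `T(B_1) < T(A_1) < … < T(B_m) < T(A_m)`). -/
def IsDeckShuffler (m : ℕ) (lA lB : Fin m → ℝ) (T : ℝ → ℝ) : Prop :=
  0 < m ∧ (∀ i, 0 < lA i) ∧ (∀ i, 0 < lB i) ∧
  ((∑ i, lA i) + (∑ i, lB i) = 1) ∧
  (∀ i, ∀ x ∈ petalA m lA i, T x = x + ∑ j ∈ Finset.Iic i, lB j) ∧
  (∀ i, ∀ x ∈ petalB m lA lB i, T x = x - ∑ j ∈ Finset.Ici i, lA j)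

/-- The `{A,B}`-itinerary of `x`: the sequence `(χ_B(T^k x))_{k ≥ 0}`. -/
noncomputable def itinerary (m : ℕ) (lA lB : Fin m → ℝ) (T : ℝ → ℝ) (x : ℝ) (k : ℕ) : ℝ :=
  (setB m lA lB).indicator (fun _ => (1 : ℝ)) (T^[k] x)


/-! ### Auxiliary lemmas -/

/-- Extension of `l : Fin m → ℝ` by zero to `ℕ`. -/
noncomputable def extFin (m : ℕ) (l : Fin m → ℝ) (k : ℕ) : ℝ :=
  if h : k < m then l ⟨k, h⟩ else 0

lemma sum_Iio_fin (m : ℕ) (l : Fin m → ℝ) (i : Fin m) :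
    ∑ j ∈ Finset.Iio i, l j = ∑ j ∈ Finset.range i.val, extFin m l j := by
  rw [← Nat.Iio_eq_range, ← Fin.map_valEmbedding_Iio, Finset.sum_map]
  refine Finset.sum_congr rfl fun j _ => ?_
  simp [extFin, j.isLt]

lemma sum_univ_fin (m : ℕ) (l : Fin m → ℝ) :
    ∑ j, l j = ∑ j ∈ Finset.range m, extFin m l j := by
  rw [← Fin.sum_univ_eq_sum_range]
  refine Finset.sum_congr rfl fun j _ => ?_
  simp [extFin, j.isLt]

lemma exists_petal (m : ℕ) (l : Fin m → ℝ) (c x : ℝ)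
    (h1 : c ≤ x) (h2 : x < c + ∑ i, l i) :
    ∃ i : Fin m, (c + ∑ j ∈ Finset.Iio i, l j ≤ x ∧
      x < (c + ∑ j ∈ Finset.Iio i, l j) + l i) := by
  classical
  set P : ℕ → Prop := fun k => c + ∑ j ∈ Finset.range k, extFin m l j ≤ x with hP
  have hP0 : P 0 := by simpa [P]
  set k := Nat.findGreatest P m with hkdef
  have hk : P k := Nat.findGreatest_spec (Nat.zero_le m) hP0
  have hkle : k ≤ m := Nat.findGreatest_le m
  have hkm : k ≠ m := by
    intro h
    rw [h] at hk
    simp only [P] at hk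
    rw [← sum_univ_fin] at hk
    linarith
  have hklt : k < m := lt_of_le_of_ne hkle hkm
  have hnot : ¬ P (k + 1) :=
    Nat.findGreatest_is_greatest (Nat.lt_succ_self k) (by omega)
  refine ⟨⟨k, hklt⟩, ?_, ?_⟩
  · rw [sum_Iio_fin]; exact hk
  · rw [sum_Iio_fin]
    simp only [P, not_le] at hnot
    rw [Finset.sum_range_succ] at hnot
    have : extFin m l k = l ⟨k, hklt⟩ := by simp [extFin, hklt]
    rw [this] at hnot
    linarith

lemma sum_Iic_le' {m : ℕ} (l : Fin m → ℝ) (hl : ∀ i, 0 < l i) (i : Fin m) :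
    ∑ j ∈ Finset.Iic i, l j ≤ ∑ j, l j :=
  Finset.sum_le_sum_of_subset_of_nonneg (Finset.subset_univ _) (fun j _ _ => (hl j).le)

lemma sum_Ici_le' {m : ℕ} (l : Fin m → ℝ) (hl : ∀ i, 0 < l i) (i : Fin m) :
    ∑ j ∈ Finset.Ici i, l j ≤ ∑ j, l j :=
  Finset.sum_le_sum_of_subset_of_nonneg (Finset.subset_univ _) (fun j _ _ => (hl j).le)

lemma Iio_sum_nonneg' {m : ℕ} (l : Fin m → ℝ) (hl : ∀ i, 0 < l i) (i : Fin m) :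
    0 ≤ ∑ j ∈ Finset.Iio i, l j :=
  Finset.sum_nonneg fun j _ => (hl j).le

lemma petal_hi {m : ℕ} (l : Fin m → ℝ) (i : Fin m) :
    (∑ j ∈ Finset.Iio i, l j) + l i = ∑ j ∈ Finset.Iic i, l j := by
  rw [← Finset.Iio_insert i, Finset.sum_insert (by simp)]; ring

lemma mem_setA_iff {m : ℕ} (lA : Fin m → ℝ) (hA : ∀ i, 0 < lA i) (x : ℝ) (hx0 : 0 ≤ x) :
    x ∈ setA m lA ↔ x < ∑ j, lA j := by
  constructor
  · rintro ⟨s, ⟨i, rfl⟩, h1, h2⟩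
    calc x < (∑ j ∈ Finset.Iio i, lA j) + lA i := h2
      _ = ∑ j ∈ Finset.Iic i, lA j := petal_hi lA i
      _ ≤ ∑ j, lA j := sum_Iic_le' lA hA i
  · intro h
    obtain ⟨i, h1, h2⟩ := exists_petal m lA 0 x hx0 (by linarith)
    exact Set.mem_iUnion.2 ⟨i, by constructor <;> [linarith; linarith]⟩

lemma mem_setB_iff {m : ℕ} (lA lB : Fin m → ℝ) (hB : ∀ i, 0 < lB i) (x : ℝ)
    (hx1 : x < (∑ j, lA j) + ∑ j, lB j) :
    x ∈ setB m lA lB ↔ (∑ j, lA j) ≤ x := by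
  constructor
  · rintro ⟨s, ⟨i, rfl⟩, h1, h2⟩
    exact le_trans (le_add_of_nonneg_right (Iio_sum_nonneg' lB hB i)) h1
  · intro h
    obtain ⟨i, h1, h2⟩ := exists_petal m lB (∑ j, lA j) x h (by linarith)
    exact Set.mem_iUnion.2 ⟨i, h1, h2⟩

section Dyn
variable {m : ℕ} {lA lB : Fin m → ℝ} {T : ℝ → ℝ} (hT : IsDeckShuffler m lA lB T)

include hT in
lemma T_mapsTo {x : ℝ} (hx : x ∈ Set.Ico (0:ℝ) 1) : T x ∈ Set.Ico (0:ℝ) 1 := by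
  obtain ⟨hm, hA, hB, hsum, hTA, hTB⟩ := hT
  obtain ⟨hx0, hx1⟩ := hx
  by_cases hcase : x < ∑ j, lA j
  · obtain ⟨s, ⟨i, rfl⟩, hxi⟩ := (mem_setA_iff lA hA x hx0).2 hcase
    rw [hTA i x hxi]
    have h1 : 0 ≤ ∑ j ∈ Finset.Iic i, lB j :=
      Finset.sum_nonneg fun j _ => (hB j).le
    have h2 : x < ∑ j ∈ Finset.Iic i, lA j := by
      have := hxi.2; rw [petal_hi lA i] at this; exact this
    have h3 := sum_Iic_le' lA hA i
    have h4 := sum_Iic_le' lB hB i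
    constructor <;> [linarith; linarith]
  · push_neg at hcase
    obtain ⟨s, ⟨i, rfl⟩, hxi⟩ :=
      (mem_setB_iff lA lB hB x (by linarith)).2 hcase
    rw [hTB i x hxi]
    have h1 : lA i ≤ ∑ j ∈ Finset.Ici i, lA j :=
      Finset.single_le_sum (fun j _ => (hA j).le) (Finset.mem_Ici.2 le_rfl)
    have h2 := sum_Ici_le' lA hA i
    constructor <;> [linarith; linarith [hA i]]

include hT in
lemma T_gap {x y : ℝ} (hx : x ∈ Set.Ico (0:ℝ) 1) (hy : y ∈ Set.Ico (0:ℝ) 1)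
    (hxy : x ≤ y) (hsym : x ∈ setB m lA lB ↔ y ∈ setB m lA lB) :
    y - x ≤ T y - T x := by
  obtain ⟨hm, hA, hB, hsum, hTA, hTB⟩ := hT
  obtain ⟨hx0, hx1⟩ := hx
  obtain ⟨hy0, hy1⟩ := hy
  by_cases hcase : (∑ j, lA j) ≤ x
  · obtain ⟨s, ⟨i, rfl⟩, hxi⟩ := (mem_setB_iff lA lB hB x (by linarith)).2 hcase
    obtain ⟨s, ⟨i', rfl⟩, hyi⟩ :=
      (mem_setB_iff lA lB hB y (by linarith)).2 (le_trans hcase hxy)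
    have hii' : i ≤ i' := by
      by_contra hlt
      push_neg at hlt
      have hsub : Finset.Iic i' ⊆ Finset.Iio i := fun j hj =>
        Finset.mem_Iio.2 (lt_of_le_of_lt (Finset.mem_Iic.1 hj) hlt)
      have h1 : ∑ j ∈ Finset.Iic i', lB j ≤ ∑ j ∈ Finset.Iio i, lB j :=
        Finset.sum_le_sum_of_subset_of_nonneg hsub (fun j _ _ => (hB j).le)
      have h2 := hyi.2
      have hp := petal_hi lB i'
      have h3 := hxi.1
      linarith
    rw [hTB i x hxi, hTB i' y hyi]
    have : ∑ j ∈ Finset.Ici i', lA j ≤ ∑ j ∈ Finset.Ici i, lA j :=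
      Finset.sum_le_sum_of_subset_of_nonneg (Finset.Ici_subset_Ici.2 hii')
        (fun j _ _ => (hA j).le)
    linarith
  · push_neg at hcase
    have hyA : y < ∑ j, lA j := by
      by_contra hyB
      push_neg at hyB
      have := hsym.2 ((mem_setB_iff lA lB hB y (by linarith)).2 hyB)
      exact absurd ((mem_setB_iff lA lB hB x (by linarith)).1 this) (not_le.2 hcase)
    obtain ⟨s, ⟨i, rfl⟩, hxi⟩ := (mem_setA_iff lA hA x hx0).2 hcase
    obtain ⟨s, ⟨i', rfl⟩, hyi⟩ := (mem_setA_iff lA hA y hy0).2 hyA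
    have hii' : i ≤ i' := by
      by_contra hlt
      push_neg at hlt
      have hsub : Finset.Iic i' ⊆ Finset.Iio i := fun j hj =>
        Finset.mem_Iio.2 (lt_of_le_of_lt (Finset.mem_Iic.1 hj) hlt)
      have h1 : ∑ j ∈ Finset.Iic i', lA j ≤ ∑ j ∈ Finset.Iio i, lA j :=
        Finset.sum_le_sum_of_subset_of_nonneg hsub (fun j _ _ => (hA j).le)
      have h2 := hyi.2
      have hp := petal_hi lA i'
      have h3 := hxi.1
      linarith
    rw [hTA i x hxi, hTA i' y hyi]
    have : ∑ j ∈ Finset.Iic i, lB j ≤ ∑ j ∈ Finset.Iic i', lB j :=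
      Finset.sum_le_sum_of_subset_of_nonneg (Finset.Iic_subset_Iic.2 hii')
        (fun j _ _ => (hB j).le)
    linarith

include hT in
lemma iter_mem {x : ℝ} (hx : x ∈ Set.Ico (0:ℝ) 1) (j : ℕ) :
    T^[j] x ∈ Set.Ico (0:ℝ) 1 := by
  induction j with
  | zero => exact hx
  | succ j ih => rw [Function.iterate_succ_apply']; exact T_mapsTo hT ih

lemma escape (u : ℕ → ℝ) (d : ℝ) (hb : ∀ k, u k ≤ 1)
    (h2 : ∀ k, u k + d ≤ u (k + 1)) : d ≤ 0 := by
  by_contra h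
  push_neg at h
  have key : ∀ k : ℕ, u 0 + k * d ≤ u k := by
    intro k
    induction k with
    | zero => simp
    | succ k ih =>
      have := h2 k
      push_cast
      linarith
  obtain ⟨k, hk⟩ := exists_nat_gt ((1 - u 0) / d)
  have : (1 - u 0) / d * d < k * d :=
    mul_lt_mul_of_pos_right hk h
  rw [div_mul_cancel₀ _ (ne_of_gt h)] at this
  have := key k
  have := hb k
  linarith

include hT in
lemma gap_iterate {x y : ℝ} (hx : x ∈ Set.Ico (0:ℝ) 1) (hy : y ∈ Set.Ico (0:ℝ) 1)
    (hxy : x ≤ y)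
    (hsym : ∀ j, (T^[j] x ∈ setB m lA lB ↔ T^[j] y ∈ setB m lA lB)) (j : ℕ) :
    y - x ≤ T^[j] y - T^[j] x := by
  induction j with
  | zero => simp
  | succ j ih =>
    rw [Function.iterate_succ_apply', Function.iterate_succ_apply']
    have h1 := iter_mem hT hx j
    have h2 := iter_mem hT hy j
    have h3 : T^[j] x ≤ T^[j] y := by linarith
    have := T_gap hT h1 h2 h3 (hsym j)
    linarith

include hT in
lemma periodic_of_itinerary {x : ℝ} (hx : x ∈ Set.Ico (0:ℝ) 1) (p : ℕ)
    (hp : ∀ j, (T^[j + p] x ∈ setB m lA lB ↔ T^[j] x ∈ setB m lA lB)) :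
    T^[p] x = x := by
  have hy : T^[p] x ∈ Set.Ico (0:ℝ) 1 := iter_mem hT hx p
  have hsym : ∀ j, (T^[j] x ∈ setB m lA lB ↔ T^[j] (T^[p] x) ∈ setB m lA lB) := by
    intro j
    rw [← Function.iterate_add_apply]
    exact (hp j).symm
  have hiter : ∀ k : ℕ, T^[p * (k + 1)] x = T^[p * k] (T^[p] x) := by
    intro k
    rw [mul_add, mul_one, Function.iterate_add_apply]
  rcases le_total x (T^[p] x) with h | h
  · have key := gap_iterate hT hx hy h hsym
    have hd : T^[p] x - x ≤ 0 := by
      apply escape (fun k => T^[p * k] x) (T^[p] x - x)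
      · intro k; exact (iter_mem hT hx (p * k)).2.le
      · intro k
        have := key (p * k)
        rw [← hiter k] at this
        show T^[p * k] x + (T^[p] x - x) ≤ T^[p * (k + 1)] x
        linarith
    linarith
  · have key := gap_iterate hT hy hx h (fun j => (hsym j).symm)
    have hd : x - T^[p] x ≤ 0 := by
      apply escape (fun k => -(T^[p * k] x)) (x - T^[p] x)
      · intro k
        have := (iter_mem hT hx (p * k)).1
        show -(T^[p * k] x) ≤ 1
        linarith
      · intro k
        have := key (p * k)
        rw [← hiter k] at this
        show -(T^[p * k] x) + (x - T^[p] x) ≤ -(T^[p * (k + 1)] x)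
        linarith
    linarith
end Dyn

lemma indicator_one_eq_iff (S : Set ℝ) (u v : ℝ) :
    S.indicator (fun _ => (1:ℝ)) u = S.indicator (fun _ => (1:ℝ)) v ↔ (u ∈ S ↔ v ∈ S) := by
  classical
  by_cases hu : u ∈ S <;> by_cases hv : v ∈ S <;>
    simp [Set.indicator_of_mem, Set.indicator_of_notMem, hu, hv]

theorem stmt9 (m : ℕ) (lA lB : Fin m → ℝ) (T : ℝ → ℝ)
    (hT : IsDeckShuffler m lA lB T)
    (x : ℝ) (hx : x ∈ Set.Ico (0 : ℝ) 1) (n : ℕ) (hn : 0 < n) :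
    (T^[n] x = x ∧ ∀ k, 0 < k → k < n → T^[k] x ≠ x) ↔
    ((∀ k, itinerary m lA lB T x (k + n) = itinerary m lA lB T x k) ∧
      ∀ k, 0 < k → k < n →
        ∃ j, itinerary m lA lB T x (j + k) ≠ itinerary m lA lB T x j) := by
  set SB := setB m lA lB with hSB
  have hitin : ∀ (z : ℝ) (k : ℕ),
      itinerary m lA lB T z k = SB.indicator (fun _ => (1:ℝ)) (T^[k] z) := fun _ _ => rfl
  constructor
  · rintro ⟨hper, hmin⟩
    constructor
    · intro k
      rw [hitin, hitin, Function.iterate_add_apply, hper]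
    · intro k hk0 hkn
      by_contra h
      push_neg at h
      have hp : ∀ j, (T^[j + k] x ∈ SB ↔ T^[j] x ∈ SB) := by
        intro j
        have := h j
        rw [hitin, hitin, indicator_one_eq_iff] at this
        exact this
      exact hmin k hk0 hkn (periodic_of_itinerary hT hx k hp)
  · rintro ⟨hper, hmin⟩
    have hp : ∀ j, (T^[j + n] x ∈ SB ↔ T^[j] x ∈ SB) := by
      intro j
      have := hper j
      rw [hitin, hitin, indicator_one_eq_iff] at this
      exact this
    refine ⟨periodic_of_itinerary hT hx n hp, ?_⟩
    intro k hk0 hkn hTk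
    obtain ⟨j, hj⟩ := hmin k hk0 hkn
    apply hj
    rw [hitin, hitin, Function.iterate_add_apply, hTk]
end
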